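/- arXiv:2310.07792 — 2 statements merged into one kernel-verified Lean document; each statement's English description precedes it below -/
import Mathlib

section
/- Let n ≥ 1, u : Fin n → ℝ, and T ≥ 1. Then (Σⱼ exp(uⱼ))^(1/T) ≤ Σⱼ exp(uⱼ/T), and consequently, for every index i, log(softmaxᵢ(u/T)) ≤ (1/T)·log(softmaxᵢ(u)). -/
open Real Finset

/-! Since `x ↦ x ^ p` is subadditive on `[0, ∞)` for `0 < p ≤ 1`, taking `p = 1 / T` and
`xⱼ = exp uⱼ` gives `(Σⱼ exp uⱼ) ^ (1/T) ≤ Σⱼ exp (uⱼ/T)`. Taking logarithms, the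
log-partition function satisfies `(1/T) log Σⱼ exp uⱼ ≤ log Σⱼ exp (uⱼ/T)`, and the log-softmax
is `uᵢ` minus the log-partition function. -/

theorem Real.rpow_sum_le_sum_rpow {ι : Type*} (s : Finset ι) {f : ι → ℝ}
    (hf : ∀ i ∈ s, 0 ≤ f i) {p : ℝ} (hp0 : 0 < p) (hp1 : p ≤ 1) :
    (∑ i ∈ s, f i) ^ p ≤ ∑ i ∈ s, f i ^ p :=
  Finset.le_sum_of_subadditive_on_pred (· ^ p) (0 ≤ ·) (zero_rpow hp0.ne').le
    (fun _ _ ha hb => rpow_add_le_add_rpow ha hb hp0.le hp1) (fun _ _ => add_nonneg) f hf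

theorem Real.rpow_sum_exp_le_sum_exp_div {ι : Type*} (s : Finset ι) (u : ι → ℝ) {T : ℝ}
    (hT : 1 ≤ T) :
    (∑ j ∈ s, exp (u j)) ^ (1 / T) ≤ ∑ j ∈ s, exp (u j / T) := by
  have hT0 : 0 < T := zero_lt_one.trans_le hT
  calc (∑ j ∈ s, exp (u j)) ^ (1 / T)
      ≤ ∑ j ∈ s, exp (u j) ^ (1 / T) :=
        rpow_sum_le_sum_rpow s (fun j _ => (exp_pos _).le) (by positivity)
          ((div_le_one hT0).mpr hT)
    _ = ∑ j ∈ s, exp (u j / T) := by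
        simp only [← exp_mul, mul_one_div]

theorem Real.log_softmax_div_le {ι : Type*} [Fintype ι] (u : ι → ℝ) {T : ℝ} (hT : 1 ≤ T)
    (i : ι) :
    log (exp (u i / T) / ∑ j, exp (u j / T)) ≤ (1 / T) * log (exp (u i) / ∑ j, exp (u j)) := by
  have hsum_pos : ∀ v : ι → ℝ, 0 < ∑ j, exp (v j) := fun v =>
    sum_pos (fun j _ => exp_pos (v j)) ⟨i, mem_univ i⟩
  have hlog_partition : (1 / T) * log (∑ j, exp (u j)) ≤ log (∑ j, exp (u j / T)) := by
    rw [← log_rpow (hsum_pos u)]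
    exact log_le_log (rpow_pos_of_pos (hsum_pos u) _) (rpow_sum_exp_le_sum_exp_div _ u hT)
  rw [log_div (exp_ne_zero _) (hsum_pos fun j => u j / T).ne',
    log_div (exp_ne_zero _) (hsum_pos u).ne', log_exp, log_exp, mul_sub, one_div_mul_eq_div]
  linarith

theorem rpow_sum_le_sum_and_log_softmax_le_general (n : ℕ) (u : Fin n → ℝ)
    (T : ℝ) (hT : 1 ≤ T) :
    (∑ j, Real.exp (u j)) ^ (1 / T) ≤ ∑ j, Real.exp (u j / T) ∧
      ∀ i : Fin n,
        Real.log (Real.exp (u i / T) / ∑ j, Real.exp (u j / T)) ≤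
          (1 / T) * Real.log (Real.exp (u i) / ∑ j, Real.exp (u j)) :=
  ⟨rpow_sum_exp_le_sum_exp_div _ u hT, log_softmax_div_le u hT⟩

/-- For `T ≥ 1`: `(Σⱼ exp uⱼ)^(1/T) ≤ Σⱼ exp (uⱼ/T)`, and consequently the
temperature-scaled log-softmax is at most `(1/T)` times the unscaled log-softmax. -/
theorem rpow_sum_le_sum_and_log_softmax_le (n : ℕ) (hn : 1 ≤ n) (u : Fin n → ℝ)
    (T : ℝ) (hT : 1 ≤ T) :
    (∑ j, Real.exp (u j)) ^ (1 / T) ≤ ∑ j, Real.exp (u j / T) ∧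
      ∀ i : Fin n,
        Real.log (Real.exp (u i / T) / ∑ j, Real.exp (u j / T)) ≤
          (1 / T) * Real.log (Real.exp (u i) / ∑ j, Real.exp (u j)) :=
  rpow_sum_le_sum_and_log_softmax_le_general n u T hT
end

section
/- Let n ≥ 1, u : Fin n → ℝ, and T ≥ 1. Then for every index i, softmaxᵢ(u/T) ≤ (softmaxᵢ(u))^(1/T); that is, exp(uᵢ/T)/Σⱼ exp(uⱼ/T) ≤ (exp(uᵢ)/Σⱼ exp(uⱼ))^(1/T). -/
open Real Finset

/-- For `T ≥ 1` and every index `i`,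
`softmaxᵢ (u/T) ≤ (softmaxᵢ u)^(1/T)`. -/
theorem softmax_temp_le_rpow_softmax (n : ℕ) (hn : 1 ≤ n) (u : Fin n → ℝ)
    (T : ℝ) (hT : 1 ≤ T) (i : Fin n) :
    Real.exp (u i / T) / ∑ j, Real.exp (u j / T) ≤
      (Real.exp (u i) / ∑ j, Real.exp (u j)) ^ (1 / T) := by
  have hT0 : 0 < T := lt_of_lt_of_le one_pos hT
  set p : ℝ := 1 / T with hp_def
  have hp0 : 0 < p := by positivity
  have hp1 : p ≤ 1 := by
    rw [hp_def, div_le_one hT0]; exact hT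
  haveI : Nonempty (Fin n) := Fin.pos_iff_nonempty.mp hn
  have hS : 0 < ∑ j, Real.exp (u j) :=
    Finset.sum_pos (fun j _ => Real.exp_pos _) Finset.univ_nonempty
  set S : ℝ := ∑ j, Real.exp (u j) with hS_def
  have hexp : ∀ x : ℝ, Real.exp (x / T) = Real.exp x ^ p := by
    intro x
    rw [Real.rpow_def_of_pos (Real.exp_pos _), Real.log_exp, hp_def, mul_one_div]
  have hsum : ∑ j, Real.exp (u j / T) = ∑ j, (Real.exp (u j) / S) ^ p * S ^ p := by
    refine Finset.sum_congr rfl fun j _ => ?_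
    rw [Real.div_rpow (Real.exp_pos _).le hS.le, hexp,
      div_mul_cancel₀ _ (ne_of_gt (Real.rpow_pos_of_pos hS _))]
  have hone : (1 : ℝ) ≤ ∑ j, (Real.exp (u j) / S) ^ p := by
    have h1 : ∑ j, Real.exp (u j) / S = 1 := by
      rw [← Finset.sum_div, div_self hS.ne']
    calc (1 : ℝ) = ∑ j, Real.exp (u j) / S := h1.symm
      _ ≤ ∑ j, (Real.exp (u j) / S) ^ p := by
          refine Finset.sum_le_sum fun j _ => ?_
          have hle1 : Real.exp (u j) / S ≤ 1 := by
            rw [div_le_one hS]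
            exact Finset.single_le_sum (fun k _ => (Real.exp_pos (u k)).le)
              (Finset.mem_univ j)
          have hpos : 0 < Real.exp (u j) / S := div_pos (Real.exp_pos _) hS
          calc Real.exp (u j) / S = (Real.exp (u j) / S) ^ (1 : ℝ) := (Real.rpow_one _).symm
            _ ≤ (Real.exp (u j) / S) ^ p :=
              Real.rpow_le_rpow_of_exponent_ge hpos hle1 hp1
  calc Real.exp (u i / T) / ∑ j, Real.exp (u j / T)
      = (Real.exp (u i) / S) ^ p * S ^ p / (∑ j, (Real.exp (u j) / S) ^ p * S ^ p) := by
        rw [hsum]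
        congr 1
        rw [Real.div_rpow (Real.exp_pos _).le hS.le, hexp,
          div_mul_cancel₀ _ (ne_of_gt (Real.rpow_pos_of_pos hS _))]
    _ = (Real.exp (u i) / S) ^ p / ∑ j, (Real.exp (u j) / S) ^ p := by
        rw [← Finset.sum_mul, mul_div_mul_right _ _ (ne_of_gt (Real.rpow_pos_of_pos hS _))]
    _ ≤ (Real.exp (u i) / S) ^ p / 1 := by
        apply div_le_div_of_nonneg_left _ one_pos hone
        positivity
    _ = (Real.exp (u i) / S) ^ p := div_one _
end
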